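/- Let p > 3 be prime, b ∈ F_p, and c ∈ F_p nonzero. For S_λ = Σ_{x ∈ F_p} σ(x³ + λ x² + b x + c), the variance of (S_λ)_{λ∈F_p} equals p − 1 − n₃ − 1/p + Σ_{x ∈ F_p} σ(4 c x³ + (b x + c)²), where n₃ is the number of x ∈ F_p with x³ − b x − 2c = 0. -/

import Mathlib

/-!
For `x ≠ 0` write `x³ + λx² + bx + c = x² (λ + A x)` with `A x = (x³ + bx + c) / x²`,
so that `S_λ = σ(c) + ∑_{x ≠ 0} σ(λ + A x)`. Since `∑_λ σ((λ + a)(λ + a'))` is `p - 1` for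
`a = a'` and `-1` otherwise, `∑_λ S_λ²` is determined by the number of pairs `(x, y)` of nonzero
elements with `A x = A y`. For fixed `x`, `A y = A x` means that `y = x` or that `y` is a root
of the quadratic `x²y² - (bx + c)y - cx`, whose discriminant is `4cx³ + (bx + c)²` and which
vanishes at `y = x` exactly when `x³ - bx - 2c = 0`.
-/

open Finset

section CharacterSums

variable {F : Type*} [Field F] [Fintype F] [DecidableEq F]

local notation "χ" => quadraticChar F

theorem quadraticChar_sum_add (hF : ringChar F ≠ 2) (a : F) : ∑ l : F, χ (l + a) = 0 :=
  (Equiv.sum_comp (Equiv.addRight a) χ).trans (quadraticChar_sum_zero hF)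

theorem quadraticChar_sum_sq : ∑ t : F, χ (t ^ 2) = Fintype.card F - 1 := by
  rw [← add_sum_erase _ _ (mem_univ 0), zero_pow two_ne_zero, MulChar.map_zero, zero_add,
    sum_congr rfl fun t ht => quadraticChar_sq_one' (ne_of_mem_erase ht), sum_const,
    card_erase_of_mem (mem_univ 0), card_univ, nsmul_one, Nat.cast_pred Fintype.card_pos]

theorem quadraticChar_sum_mul_sub_one (hF : ringChar F ≠ 2) :
    ∑ t : F, χ (t * (t - 1)) = -1 := by
  -- the sum is `χ(-1) J(χ, χ)`, and `J(χ, χ⁻¹) = -χ(-1)` with `χ⁻¹ = χ`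
  have hJ := jacobiSum_nontrivial_inv (quadraticChar_ne_one hF)
  rw [(quadraticChar_isQuadratic F).inv, jacobiSum] at hJ
  have hsq : χ (-1) * χ (-1) = 1 := by
    rw [← sq]; exact quadraticChar_sq_one (neg_ne_zero.2 one_ne_zero)
  calc ∑ t : F, χ (t * (t - 1)) = χ (-1) * ∑ t : F, χ t * χ (1 - t) := by
        rw [mul_sum]; refine sum_congr rfl fun t _ => ?_
        rw [← map_mul, ← map_mul]; ring_nf
    _ = -1 := by rw [hJ, mul_neg, hsq]

theorem quadraticChar_sum_add_mul_add (hF : ringChar F ≠ 2) (a b : F) :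
    ∑ l : F, χ ((l + a) * (l + b)) = if a = b then (Fintype.card F : ℤ) - 1 else -1 := by
  split_ifs with hab
  · subst hab
    simp_rw [← sq]
    exact (Equiv.sum_comp (Equiv.addRight a) fun l => χ (l ^ 2)).trans quadraticChar_sum_sq
  · have hd : a - b ≠ 0 := sub_ne_zero.2 hab
    -- the substitution `l = (a - b) t - a` turns `(l + a) (l + b)` into `(a - b)² t (t - 1)`
    let e : F ≃ F := (Equiv.mulLeft₀ (a - b) hd).trans (Equiv.subRight a)
    rw [← Equiv.sum_comp e, ← quadraticChar_sum_mul_sub_one hF]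
    refine sum_congr rfl fun t _ => ?_
    rw [show (e t + a) * (e t + b) = (a - b) ^ 2 * (t * (t - 1)) by
        rw [show e t = (a - b) * t - a from rfl]; ring,
      map_mul, quadraticChar_sq_one' hd, one_mul]

theorem sum_sq_sum_quadraticChar_add (hF : ringChar F ≠ 2) {ι : Type*} (s : Finset ι)
    (a : ι → F) :
    ∑ l : F, (∑ i ∈ s, χ (l + a i)) ^ 2
      = Fintype.card F * ∑ i ∈ s, (#{j ∈ s | a j = a i} : ℤ) - #s ^ 2 := by
  have hpair : ∀ i j, ∑ l : F, χ (l + a i) * χ (l + a j)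
      = Fintype.card F * (if a j = a i then 1 else 0) - 1 := fun i j => by
    simp_rw [← map_mul]
    rw [quadraticChar_sum_add_mul_add hF]
    rcases eq_or_ne (a i) (a j) with h | h
    · simp [h]
    · simp [h, h.symm]
  calc ∑ l : F, (∑ i ∈ s, χ (l + a i)) ^ 2
      = ∑ i ∈ s, ∑ j ∈ s, ∑ l : F, χ (l + a i) * χ (l + a j) := by
        simp_rw [sq, sum_mul_sum]
        rw [sum_comm]; exact sum_congr rfl fun i _ => sum_comm
    _ = _ := by
        simp_rw [hpair, sum_sub_distrib, ← mul_sum, sum_boole, sum_const, nsmul_eq_mul, mul_one]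
        ring

theorem card_quadratic_roots (hF : ringChar F ≠ 2) {a : F} (ha : a ≠ 0) (b c : F) :
    (#{y | a * y ^ 2 + b * y + c = 0} : ℤ) = χ (discrim a b c) + 1 := by
  have : NeZero (2 : F) := ⟨Ring.two_ne_zero hF⟩
  let e : F ≃ F :=
    (Equiv.mulLeft₀ (2 * a) (mul_ne_zero two_ne_zero ha)).trans (Equiv.addRight b)
  rw [← quadraticChar_card_sqrts hF, Set.toFinset_ofPred]
  congr 1
  refine card_equiv e fun y => ?_
  simp only [mem_filter_univ, sq, quadratic_eq_zero_iff_discrim_eq_sq ha, eq_comm]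
  rfl

end CharacterSums

section CubicPencil

variable {F : Type*} [Field F] {b c : F}

/-- For `x ≠ 0`, `x` is a root of `X³ + λX² + bX + c` exactly when
`λ = -cubicRootParam b c x`. -/
def cubicRootParam (b c x : F) : F := (x ^ 3 + b * x + c) / x ^ 2

theorem cubic_eq_sq_mul_add_cubicRootParam {x : F} (hx : x ≠ 0) (l : F) :
    x ^ 3 + l * x ^ 2 + b * x + c = x ^ 2 * (l + cubicRootParam b c x) := by
  rw [cubicRootParam]; field_simp; ring

theorem cubicRootParam_eq_iff {x y : F} (hx : x ≠ 0) (hy : y ≠ 0) :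
    cubicRootParam b c y = cubicRootParam b c x
      ↔ y = x ∨ x ^ 2 * y ^ 2 - (b * x + c) * y - c * x = 0 := by
  rw [cubicRootParam, cubicRootParam, div_eq_div_iff (pow_ne_zero 2 hy) (pow_ne_zero 2 hx),
    ← sub_eq_zero, ← sub_eq_zero (a := y), ← mul_eq_zero]
  constructor <;> intro h <;> linear_combination h

variable [Fintype F] [DecidableEq F]

local notation "χ" => quadraticChar F

theorem sum_quadraticChar_cubic (l : F) :
    ∑ x : F, χ (x ^ 3 + l * x ^ 2 + b * x + c)
      = χ c + ∑ x ∈ univ.erase 0, χ (l + cubicRootParam b c x) := by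
  rw [← add_sum_erase _ _ (mem_univ 0)]
  congr 1
  · ring_nf
  · refine sum_congr rfl fun x hx => ?_
    rw [cubic_eq_sq_mul_add_cubicRootParam (ne_of_mem_erase hx), map_mul,
      quadraticChar_sq_one' (ne_of_mem_erase hx), one_mul]

theorem sum_sum_quadraticChar_cubic (hF : ringChar F ≠ 2) :
    ∑ l : F, ∑ x : F, χ (x ^ 3 + l * x ^ 2 + b * x + c) = Fintype.card F * χ c := by
  simp_rw [sum_quadraticChar_cubic, sum_add_distrib, sum_const, card_univ, nsmul_eq_mul]
  rw [sum_comm, sum_eq_zero fun x _ => quadraticChar_sum_add hF _, add_zero]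

theorem sum_sq_sum_quadraticChar_cubic_eq_sum_card (hF : ringChar F ≠ 2) (hc : c ≠ 0) :
    ∑ l : F, (∑ x : F, χ (x ^ 3 + l * x ^ 2 + b * x + c)) ^ 2
      = Fintype.card F + Fintype.card F * ∑ x ∈ univ.erase (0 : F),
          (#{y ∈ univ.erase (0 : F) | cubicRootParam b c y = cubicRootParam b c x} : ℤ)
        - (Fintype.card F - 1) ^ 2 := by
  simp_rw [sum_quadraticChar_cubic, add_sq, sum_add_distrib, ← mul_sum]
  rw [sum_comm, sum_eq_zero fun x _ => quadraticChar_sum_add hF _, mul_zero,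
    add_zero, sum_sq_sum_quadraticChar_add hF, quadraticChar_sq_one hc, sum_const, card_univ,
    nsmul_one, card_erase_of_mem (mem_univ _), card_univ, Nat.cast_pred Fintype.card_pos]
  ring

theorem filter_cubicRootParam_eq (hc : c ≠ 0) {x : F} (hx : x ≠ 0) :
    ({y ∈ univ.erase 0 | cubicRootParam b c y = cubicRootParam b c x} : Finset F)
      = insert x ({y | x ^ 2 * y ^ 2 - (b * x + c) * y - c * x = 0} : Finset F) := by
  ext y
  simp only [mem_filter, mem_erase, mem_univ, and_true, true_and, mem_insert]
  constructor
  · rintro ⟨hy, h⟩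
    exact (cubicRootParam_eq_iff hx hy).1 h
  · rintro (rfl | h)
    · exact ⟨hx, rfl⟩
    · have hy : y ≠ 0 := by
        rintro rfl
        exact mul_ne_zero hc hx (by linear_combination -h)
      exact ⟨hy, (cubicRootParam_eq_iff hx hy).2 (Or.inr h)⟩

theorem card_filter_cubicRootParam_eq (hF : ringChar F ≠ 2) (hc : c ≠ 0) {x : F}
    (hx : x ≠ 0) :
    (#{y ∈ univ.erase (0 : F) | cubicRootParam b c y = cubicRootParam b c x} : ℤ)
      = χ (4 * c * x ^ 3 + (b * x + c) ^ 2) + 2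
        - if x ^ 3 - b * x - 2 * c = 0 then 1 else 0 := by
  have hroots : (#{y | x ^ 2 * y ^ 2 - (b * x + c) * y - c * x = 0} : ℤ)
      = χ (4 * c * x ^ 3 + (b * x + c) ^ 2) + 1 := by
    simp only [sub_eq_add_neg, ← neg_mul]
    rw [card_quadratic_roots hF (pow_ne_zero 2 hx), discrim]
    ring_nf
  have hdiag : x ∈ ({y | x ^ 2 * y ^ 2 - (b * x + c) * y - c * x = 0} : Finset F)
      ↔ x ^ 3 - b * x - 2 * c = 0 := by
    rw [mem_filter_univ, show x ^ 2 * x ^ 2 - (b * x + c) * x - c * x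
      = x * (x ^ 3 - b * x - 2 * c) by ring, mul_eq_zero, or_iff_right hx]
  rw [filter_cubicRootParam_eq hc hx, card_insert_eq_ite]
  simp only [hdiag]
  split_ifs <;> push_cast <;> linarith

theorem sum_card_filter_cubicRootParam_eq (hF : ringChar F ≠ 2) (hc : c ≠ 0) :
    ∑ x ∈ univ.erase (0 : F),
        (#{y ∈ univ.erase 0 | cubicRootParam b c y = cubicRootParam b c x} : ℤ)
      = ∑ x : F, χ (4 * c * x ^ 3 + (b * x + c) ^ 2) + 2 * (Fintype.card F - 1) - 1
        - #{x : F | x ^ 3 - b * x - 2 * c = 0} := by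
  have hzero : (0 : F) ∉ ({x | x ^ 3 - b * x - 2 * c = 0} : Finset F) := by
    rw [mem_filter_univ]
    exact fun h => mul_ne_zero (Ring.two_ne_zero hF) hc (by linear_combination -h)
  rw [sum_congr rfl fun x hx => card_filter_cubicRootParam_eq hF hc (ne_of_mem_erase hx),
    sum_sub_distrib, sum_add_distrib, sum_erase_eq_sub (mem_univ 0), sum_boole, filter_erase,
    erase_eq_of_notMem hzero, sum_const, card_erase_of_mem (mem_univ 0), card_univ, nsmul_eq_mul,
    Nat.cast_pred Fintype.card_pos, show 4 * c * 0 ^ 3 + (b * 0 + c) ^ 2 = c ^ 2 by ring,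
    quadraticChar_sq_one' hc]
  ring

theorem sum_sq_sum_quadraticChar_cubic (hF : ringChar F ≠ 2) (hc : c ≠ 0) :
    ∑ l : F, (∑ x : F, χ (x ^ 3 + l * x ^ 2 + b * x + c)) ^ 2
      = Fintype.card F ^ 2 - 1
        + Fintype.card F * ∑ x : F, χ (4 * c * x ^ 3 + (b * x + c) ^ 2)
        - Fintype.card F * #{x : F | x ^ 3 - b * x - 2 * c = 0} := by
  rw [sum_sq_sum_quadraticChar_cubic_eq_sum_card hF hc, sum_card_filter_cubicRootParam_eq hF hc]
  ring

theorem variance_sum_quadraticChar_cubic (hF : ringChar F ≠ 2) (hc : c ≠ 0) :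
    (((∑ l : F, (∑ x : F, χ (x ^ 3 + l * x ^ 2 + b * x + c)) ^ 2 : ℤ) : ℚ)
        / Fintype.card F)
      - (((∑ l : F, ∑ x : F, χ (x ^ 3 + l * x ^ 2 + b * x + c) : ℤ) : ℚ)
        / Fintype.card F) ^ 2
      = Fintype.card F - 1 - (#{x : F | x ^ 3 - b * x - 2 * c = 0} : ℚ) - 1 / Fintype.card F
        + ((∑ x : F, χ (4 * c * x ^ 3 + (b * x + c) ^ 2) : ℤ) : ℚ) := by
  have hχc : ((χ c : ℤ) : ℚ) ^ 2 = 1 := by exact_mod_cast quadraticChar_sq_one hc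
  have hq : (Fintype.card F : ℚ) ≠ 0 := Nat.cast_ne_zero.2 Fintype.card_ne_zero
  rw [sum_sq_sum_quadraticChar_cubic hF hc, sum_sum_quadraticChar_cubic hF]
  generalize ∑ x : F, χ (4 * c * x ^ 3 + (b * x + c) ^ 2) = T
  push_cast
  field_simp
  linear_combination (-(Fintype.card F : ℚ)) * hχc

end CubicPencil

theorem stmt9 (p : ℕ) [Fact p.Prime] (hp : 3 < p) (b c : ZMod p) (hc : c ≠ 0) :
    ((((∑ l : ZMod p, (∑ x : ZMod p, quadraticChar (ZMod p) (x ^ 3 + l * x ^ 2 + b * x + c)) ^ 2) : ℤ) : ℚ) / p) -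
      ((((∑ l : ZMod p, ∑ x : ZMod p, quadraticChar (ZMod p) (x ^ 3 + l * x ^ 2 + b * x + c)) : ℤ) : ℚ) / p) ^ 2
      = p - 1
        - ((Finset.univ.filter fun x : ZMod p => x ^ 3 - b * x - 2 * c = 0).card : ℚ)
        - 1 / p
        + ((∑ x : ZMod p, quadraticChar (ZMod p) (4 * c * x ^ 3 + (b * x + c) ^ 2) : ℤ) : ℚ) := by
  have hF : ringChar (ZMod p) ≠ 2 := by
    rw [ZMod.ringChar_zmod_n]; omega
  simpa only [ZMod.card] using variance_sum_quadraticChar_cubic hF hc
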